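/- arXiv:1207.1673 — 2 statements merged into one kernel-verified Lean document; each statement's English description precedes it below -/
import Mathlib

section
/- Let O be a complete discrete valuation ring, and consider the two-variable power series ring O[[T₁, T₂]], viewed as R₂[[T₁]] with R₂ = O[[T₂]]. Suppose g(T₁, T₂) ∈ R₂[[T₁]] has Weierstrass decomposition g = u₂(T₁)·f₂(T₁)·ϖ₂(T₂) with f₂ a distinguished polynomial of degree r in R₂[T₁], u₂ a unit, and ϖ₂ ∈ R₂. If ζ is a p-power root of unity (in a sufficiently large O) with ϖ₂(ζ − 1) ≠ 0, then the one-variable power series g(T₁, ζ − 1) ∈ O'[[T₁]] (O' the ring of integers of the extension generated by ζ) has Weierstrass degree exactly r. -/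
open PowerSeries

/-- A distinguished (Weierstrass) polynomial over a local ring: monic, with all
non-leading coefficients in the maximal ideal. -/
def Polynomial.IsDistinguished {R : Type*} [CommRing R] [IsLocalRing R]
    (f : Polynomial R) : Prop :=
  f.Monic ∧ ∀ i < f.natDegree, f.coeff i ∈ IsLocalRing.maximalIdeal R

/-- `g ∈ O⟦X⟧` has Weierstrass degree `r`: it factors as `u·f·ϖ^μ` with `u` a unit,
`ϖ` a uniformizer, and `f` a distinguished polynomial of degree `r`. -/
def PowerSeries.HasWeierstrassDegree {O : Type*} [CommRing O] [IsLocalRing O]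
    (g : PowerSeries O) (r : ℕ) : Prop :=
  ∃ (u : PowerSeries O) (f : Polynomial O) (ϖ : O) (μ : ℕ),
    IsUnit u ∧ Irreducible ϖ ∧ f.IsDistinguished ∧ f.natDegree = r ∧
      g = u * (f : PowerSeries O) * (C ϖ) ^ μ

/- Specializing `T₂ = ζ − 1` is a local homomorphism `φ : O⟦T₂⟧ →+* O`, so it sends the
non-leading coefficients of the monic `f₂` into the maximal ideal of `O`: the image of `f₂` is
still distinguished of degree `r`. The image of `u₂` is a unit, and the nonzero constant
`φ(ϖ₂)` of the DVR `O` is a unit times a power of a uniformizer; that unit is absorbed into the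
unit part of the factorization. -/

theorem Polynomial.IsDistinguished.map {R S : Type*} [CommRing R] [IsLocalRing R]
    [CommRing S] [IsLocalRing S] {f : Polynomial R} (hf : f.IsDistinguished)
    (φ : R →+* S) [IsLocalHom φ] : (f.map φ).IsDistinguished := by
  refine ⟨hf.1.map φ, fun i hi => ?_⟩
  rw [hf.1.natDegree_map] at hi
  rw [Polynomial.coeff_map]
  exact map_nonunit φ _ (hf.2 i hi)

theorem PowerSeries.hasWeierstrassDegree_of_eq_mul_C {O : Type*} [CommRing O] [IsDomain O]
    [IsDiscreteValuationRing O] {g u : PowerSeries O} {f : Polynomial O} {c : O}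
    (hu : IsUnit u) (hf : f.IsDistinguished) (hc : c ≠ 0) (hg : g = u * f * C c) :
    g.HasWeierstrassDegree f.natDegree := by
  obtain ⟨ϖ, hϖ⟩ := IsDiscreteValuationRing.exists_irreducible O
  obtain ⟨μ, w, rfl⟩ := IsDiscreteValuationRing.eq_unit_mul_pow_irreducible hc hϖ
  refine ⟨u * C (w : O), f, ϖ, μ, hu.mul (w.isUnit.map C), hϖ, hf, rfl, ?_⟩
  rw [hg, map_mul, map_pow]
  ring

theorem weierstrass_degree_of_specialization_general
    (O : Type*) [CommRing O] [IsDomain O] [IsDiscreteValuationRing O]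
    (g u₂ : PowerSeries (PowerSeries O)) (f₂ : Polynomial (PowerSeries O))
    (ϖ₂ : PowerSeries O) (r : ℕ)
    (hu : IsUnit u₂) (hf : f₂.IsDistinguished) (hfr : f₂.natDegree = r)
    (hdec : g = u₂ * (f₂ : PowerSeries (PowerSeries O)) * PowerSeries.C ϖ₂)
    (φ : PowerSeries O →+* O) (hφloc : IsLocalHom φ)
    (hϖζ : φ ϖ₂ ≠ 0) :
    (PowerSeries.map φ g).HasWeierstrassDegree r := by
  have hmap : PowerSeries.map φ g =
      PowerSeries.map φ u₂ * (f₂.map φ : PowerSeries O) * C (φ ϖ₂) := by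
    rw [hdec, map_mul, map_mul, map_C, Polynomial.polynomial_map_coe]
  rw [← hfr, ← hf.1.natDegree_map φ]
  exact hasWeierstrassDegree_of_eq_mul_C (hu.map _) (hf.map φ) hϖζ hmap

/-- let `g = u₂(T₁)·f₂(T₁)·ϖ₂(T₂)` in `R₂⟦T₁⟧` with `R₂ = O⟦T₂⟧`, `f₂`
distinguished of degree `r`, `u₂` a unit, `ϖ₂ ∈ R₂`.  If `ζ` is a primitive `p^k`-th
root of unity (in a sufficiently large `O`) with `ϖ₂(ζ−1) ≠ 0`, then the specialized
one-variable power series `g(T₁, ζ−1)` has Weierstrass degree exactly `r`.  Here the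
specialization `T₂ = ζ − 1` is the local `O`-algebra map `φ : O⟦T₂⟧ →+* O` with
`φ(T₂) = ζ − 1`. -/
theorem weierstrass_degree_of_specialization
    (p : ℕ) [Fact p.Prime]
    (O : Type*) [CommRing O] [IsDomain O] [IsDiscreteValuationRing O]
    [IsAdicComplete (IsLocalRing.maximalIdeal O) O]
    (hp : (p : O) ∈ IsLocalRing.maximalIdeal O)
    (g u₂ : PowerSeries (PowerSeries O)) (f₂ : Polynomial (PowerSeries O))
    (ϖ₂ : PowerSeries O) (r : ℕ)
    (hu : IsUnit u₂) (hf : f₂.IsDistinguished) (hfr : f₂.natDegree = r)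
    (hdec : g = u₂ * (f₂ : PowerSeries (PowerSeries O)) * PowerSeries.C ϖ₂)
    (ζ : O) (k : ℕ) (hk : 1 ≤ k) (hζ : IsPrimitiveRoot ζ (p ^ k))
    (φ : PowerSeries O →+* O) (hφloc : IsLocalHom φ)
    (hφC : ∀ a : O, φ (C a) = a) (hφX : φ PowerSeries.X = ζ - 1)
    (hϖζ : φ ϖ₂ ≠ 0) :
    (PowerSeries.map φ g).HasWeierstrassDegree r :=
  weierstrass_degree_of_specialization_general O g u₂ f₂ ϖ₂ r hu hf hfr hdec φ hφloc hϖζ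
end

section
/- Let O be a complete discrete valuation ring, g ∈ O[[T]] nonzero with Weierstrass degree d and Weierstrass factorization g = u·f·ϖ^μ. For m ≥ 1, define g_m(T) := g((1+T)^m − 1) ∈ O[[T]] (composition with the power map induced by the norm on a ℤ_p-quotient of index m, m a power of p). Then g_m has Weierstrass degree m·d. -/
open PowerSeries

/-- The substitution `g(T) ↦ g((1+T)^m − 1)`, defined coefficientwise (the `k`-th term
`a_k·((1+T)^m − 1)^k` contributes to the coefficient of `T^j` only for `k ≤ j`). -/
noncomputable def PowerSeries.substPow {O : Type*} [CommRing O]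
    (m : ℕ) (g : PowerSeries O) : PowerSeries O :=
  PowerSeries.mk fun j =>
    ∑ k ∈ Finset.range (j + 1),
      coeff k g * coeff j (((1 + PowerSeries.X) ^ m - 1) ^ k)

/-! The series `g_m` is the substitution of `q = (1+X)^m - 1` into `g`, a ring endomorphism of
`O⟦X⟧` fixing constants, so it sends `u·f·ϖ^μ` to `u(q)·(f ∘ q)·ϖ^μ` with `u(q)` a unit. The
polynomial `f ∘ q` is monic of degree `m·d`, and it is distinguished because reduction modulo the
maximal ideal commutes with composition: `f ≡ X^d`, and `q ≡ X^m` since the residue field has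
characteristic `p` and `m = p^k`. -/

namespace Polynomial

variable {R : Type*} [CommRing R]

theorem Monic.natDegree_comp [Nontrivial R] {f q : R[X]} (hf : f.Monic) (hq : q.Monic) :
    (f.comp q).natDegree = f.natDegree * q.natDegree :=
  natDegree_comp_eq_of_mul_ne_zero (by simp [hf.leadingCoeff, hq.leadingCoeff])

theorem coe_comp (f q : R[X]) :
    ((f.comp q : R[X]) : PowerSeries R) = aeval (q : PowerSeries R) f := by
  simpa [comp_eq_aeval] using (aeval_algHom_apply (coeToPowerSeries.algHom R) q f).symm

theorem natDegree_one_add_X_pow_sub_one [Nontrivial R] (n : ℕ) :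
    ((1 + X : R[X]) ^ n - 1).natDegree = n := by
  rw [← C_1, natDegree_sub_C, add_comm, natDegree_pow_X_add_C]

theorem monic_one_add_X_pow_sub_one [Nontrivial R] {n : ℕ} (hn : n ≠ 0) :
    ((1 + X : R[X]) ^ n - 1).Monic := by
  rw [add_comm, ← C_1]
  refine ((monic_X_add_C 1).pow n).sub_of_left ?_
  rw [degree_C one_ne_zero, degree_eq_natDegree ((monic_X_add_C 1).pow n).ne_zero,
    natDegree_pow_X_add_C]
  exact_mod_cast Nat.pos_of_ne_zero hn

theorem isDistinguished_iff_map_residue [IsLocalRing R] {f : R[X]} :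
    f.IsDistinguished ↔ f.Monic ∧ f.map (IsLocalRing.residue R) = X ^ f.natDegree := by
  refine and_congr_right fun hf => ⟨fun h => ?_, fun h i hi => ?_⟩
  · ext i
    rw [coeff_map, coeff_X_pow]
    rcases lt_trichotomy i f.natDegree with hi | rfl | hi
    · rw [if_neg hi.ne, IsLocalRing.residue_eq_zero_iff]
      exact h i hi
    · simp [hf]
    · simp [hi.ne', coeff_eq_zero_of_natDegree_lt hi]
  · simpa [coeff_X_pow, hi.ne, IsLocalRing.residue_eq_zero_iff] using congr_arg (coeff · i) h

theorem IsDistinguished.comp [IsLocalRing R] {f q : R[X]} (hf : f.IsDistinguished)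
    (hq : q.IsDistinguished) (hq₀ : q.natDegree ≠ 0) : (f.comp q).IsDistinguished := by
  rw [isDistinguished_iff_map_residue] at *
  refine ⟨hf.1.comp hq.1 hq₀, ?_⟩
  rw [map_comp, hf.2, hq.2, X_pow_comp, ← pow_mul, hf.1.natDegree_comp hq.1, mul_comm]

theorem IsDistinguished.natDegree_ne_zero [IsLocalRing R] {q : R[X]} (hq : q.IsDistinguished)
    (hq₀ : q.coeff 0 = 0) : q.natDegree ≠ 0 := by
  intro h
  simp [hq.1.natDegree_eq_zero.1 h] at hq₀

theorem isDistinguished_one_add_X_pow_sub_one [IsLocalRing R] {p : ℕ} [Fact p.Prime]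
    (hp : (p : R) ∈ IsLocalRing.maximalIdeal R) (k : ℕ) :
    ((1 + X : R[X]) ^ p ^ k - 1).IsDistinguished := by
  have : CharP (IsLocalRing.ResidueField R) p := (CharP.charP_iff_prime_eq_zero Fact.out).2
    (by simpa using (IsLocalRing.residue_eq_zero_iff (p : R)).2 hp)
  refine isDistinguished_iff_map_residue.2
    ⟨monic_one_add_X_pow_sub_one (pow_ne_zero _ (Fact.out : p.Prime).ne_zero), ?_⟩
  simp [natDegree_one_add_X_pow_sub_one, add_pow_char_pow]

end Polynomial

namespace PowerSeries

variable {R : Type*} [CommRing R]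

theorem substPow_eq_subst (m : ℕ) (g : R⟦X⟧) :
    substPow m g = g.subst ((1 + X : R⟦X⟧) ^ m - 1) := by
  have ha : HasSubst ((1 + X : R⟦X⟧) ^ m - 1) := HasSubst.of_constantCoeff_zero' (by simp)
  have hX : X ∣ (1 + X : R⟦X⟧) ^ m - 1 := X_dvd_iff.2 (by simp)
  ext j
  have hvanish (i : ℕ) (hi : j < i) : coeff j (((1 + X : R⟦X⟧) ^ m - 1) ^ i) = 0 :=
    X_pow_dvd_iff.1 (pow_dvd_pow_of_dvd hX i) j hi
  rw [substPow, coeff_mk, coeff_subst' ha,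
    finsum_eq_sum_of_support_subset _ (s := Finset.range (j + 1))]
  · simp only [smul_eq_mul]
  · intro i hi
    rw [Function.mem_support] at hi
    rw [Finset.coe_range, Set.mem_Iio]
    by_contra! h
    exact hi (by rw [hvanish i (by omega), smul_zero])

theorem HasWeierstrassDegree.subst [IsLocalRing R] {g : R⟦X⟧} {d : ℕ}
    (hd : g.HasWeierstrassDegree d) {q : Polynomial R} (hq : q.IsDistinguished)
    (hq₀ : q.coeff 0 = 0) :
    HasWeierstrassDegree (g.subst (q : R⟦X⟧)) (q.natDegree * d) := by
  obtain ⟨u, f, ϖ, μ, hu, hϖ, hf, rfl, rfl⟩ := hd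
  have ha : HasSubst (q : R⟦X⟧) := HasSubst.of_constantCoeff_zero' (by simp [hq₀])
  refine ⟨u.subst (q : R⟦X⟧), f.comp q, ϖ, μ, ?_, hϖ, hf.comp hq (hq.natDegree_ne_zero hq₀),
    by rw [hf.1.natDegree_comp hq.1, mul_comm], ?_⟩
  · rw [← coe_substAlgHom ha]
    exact hu.map _
  · rw [← coe_substAlgHom ha, map_mul, map_mul, map_pow, substAlgHom_coe, Polynomial.coe_comp,
      ← algebraMap_eq, AlgHom.commutes]

end PowerSeries

theorem substPow_weierstrass_degree_general
    (p : ℕ) [Fact p.Prime]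
    (O : Type*) [CommRing O] [IsDomain O] [IsDiscreteValuationRing O]
    (hp : (p : O) ∈ IsLocalRing.maximalIdeal O)
    (g : PowerSeries O) (d : ℕ)
    (hd : g.HasWeierstrassDegree d)
    (m : ℕ) (k : ℕ) (hmp : m = p ^ k) :
    (PowerSeries.substPow m g).HasWeierstrassDegree (m * d) := by
  subst hmp
  have hq₀ : ((1 + Polynomial.X : Polynomial O) ^ p ^ k - 1).coeff 0 = 0 := by
    simp [Polynomial.coeff_zero_eq_eval_zero]
  have key := hd.subst (Polynomial.isDistinguished_one_add_X_pow_sub_one hp k) hq₀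
  rw [Polynomial.natDegree_one_add_X_pow_sub_one] at key
  have hcoe : (((1 + Polynomial.X) ^ p ^ k - 1 : Polynomial O) : PowerSeries O) =
      (1 + PowerSeries.X) ^ p ^ k - 1 := by
    simp
  rwa [PowerSeries.substPow_eq_subst, ← hcoe]

/-- for `O` the ring of integers of a finite extension of `ℚ_p` and
`g ∈ O⟦T⟧` nonzero of Weierstrass degree `d`, the series
`g_m(T) = g((1+T)^m − 1)` (for `m = p^k` a `p`-power, corresponding to precomposition
with the norm map of index `m` on `ℤ_p`) has Weierstrass degree `m·d`. -/
theorem substPow_weierstrass_degree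
    (p : ℕ) [Fact p.Prime]
    (O : Type*) [CommRing O] [IsDomain O] [IsDiscreteValuationRing O]
    [IsAdicComplete (IsLocalRing.maximalIdeal O) O]
    (hp : (p : O) ∈ IsLocalRing.maximalIdeal O)
    (g : PowerSeries O) (hg : g ≠ 0) (d : ℕ)
    (hd : g.HasWeierstrassDegree d)
    (m : ℕ) (hm : 1 ≤ m) (k : ℕ) (hmp : m = p ^ k) :
    (PowerSeries.substPow m g).HasWeierstrassDegree (m * d) :=
  substPow_weierstrass_degree_general p O hp g d hd m k hmp
end
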